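/- Let AS be an axiomatic system on a type Φ of formulas. Then ⊢ʳ_AS is a monotone consequence relation if and only if ⊢_AS = ⊢ʳ_AS. -/
import Mathlib


/-- A consequence relation on a type `Φ` of formulas. -/
def IsConseq {Φ : Type*} (C : Multiset Φ → Φ → Prop) : Prop :=
  (∀ φ : Φ, C {φ} φ) ∧
  (∀ (Γ Δ : Multiset Φ) (ψ φ : Φ), C (Γ + {ψ}) φ → C Δ ψ → C (Γ + Δ) φ)

/-- Monotonicity. -/
def IsMonotone {Φ : Type*} (C : Multiset Φ → Φ → Prop) : Prop :=
  ∀ (Γ Δ : Multiset Φ) (φ : Φ), C Γ φ → C (Γ + Δ) φ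

/-- `TDer AS Λ φ` holds iff there is a finite tree labeled by formulas whose root
is labeled `φ`, whose multiset of leaf labels is `Λ`, and such that each non-leaf
node labeled `ψ` whose immediate predecessors carry the multiset of labels `Δ`
satisfies `(Δ, ψ) ∈ AS` (nodes with an empty multiset of predecessors that are
instances of axioms `(0, ψ) ∈ AS` are leaves labeled by axioms, contributing
nothing to `Λ`; the leaves counted in `Λ` are the remaining ones).
A `leaf` is a single-node tree; a `rule` node has a multiset of immediate subtrees,
encoded by the multiset `L` of pairs (leaf-label multiset of the subtree, root label
of the subtree). -/
inductive TDer {Φ : Type*} (AS : Set (Multiset Φ × Φ)) : Multiset Φ → Φ → Prop where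
  | leaf (φ : Φ) : TDer AS {φ} φ
  | rule (L : Multiset (Multiset Φ × Φ)) (φ : Φ)
      (hmem : (Multiset.map Prod.snd L, φ) ∈ AS)
      (hsub : ∀ p ∈ L, TDer AS p.1 p.2) :
      TDer AS (Multiset.map Prod.fst L).sum φ

/-- `Γ ⊢_AS φ`: there is a tree-proof of `φ` from `Γ` in `AS`: a locally correct
tree with root `φ` whose multiset `Λ` of leaf labels satisfies `Λ ≤ Γ ⊎ Δ` for some
finite multiset `Δ` of axioms of `AS` (i.e., each formula that is not an axiom
labels at most `Γ(χ)` leaves). -/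
def TProv {Φ : Type*} (AS : Set (Multiset Φ × Φ)) (Γ : Multiset Φ) (φ : Φ) : Prop :=
  ∃ Λ Δ : Multiset Φ, TDer AS Λ φ ∧ (∀ δ ∈ Δ, ((0 : Multiset Φ), δ) ∈ AS) ∧ Λ ≤ Γ + Δ

/-- `Γ ⊢ʳ_AS φ`: there is a relevant tree-proof of `φ` from `Γ` in `AS`: a locally
correct tree with root `φ` whose multiset of leaf labels equals `Γ ⊎ Δ` for some
finite multiset `Δ` of axioms of `AS`. -/
def RTProv {Φ : Type*} (AS : Set (Multiset Φ × Φ)) (Γ : Multiset Φ) (φ : Φ) : Prop :=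
  ∃ Λ Δ : Multiset Φ, TDer AS Λ φ ∧ (∀ δ ∈ Δ, ((0 : Multiset Φ), δ) ∈ AS) ∧ Λ = Γ + Δ

private lemma mem_msum {Φ : Type*} {S : Multiset (Multiset Φ)} {a : Φ}
    (h : a ∈ S.sum) : ∃ s ∈ S, a ∈ s := by
  induction S using Multiset.induction with
  | empty => simp at h
  | cons t S ih =>
    rw [Multiset.sum_cons, Multiset.mem_add] at h
    rcases h with h | h
    · exact ⟨t, Multiset.mem_cons_self _ _, h⟩
    · obtain ⟨s, hs, ha⟩ := ih h
      exact ⟨s, Multiset.mem_cons_of_mem hs, ha⟩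

private lemma tder_subst {Φ : Type*} [DecidableEq Φ] {AS : Set (Multiset Φ × Φ)}
    {Λ : Multiset Φ} {φ ψ : Φ} (h : TDer AS Λ φ) {Λ' : Multiset Φ} (h' : TDer AS Λ' ψ) :
    ψ ∈ Λ → TDer AS (Λ.erase ψ + Λ') φ := by
  induction h with
  | leaf χ =>
    intro hψ
    rw [Multiset.mem_singleton] at hψ
    subst hψ
    simpa using h'
  | rule L χ hmem hsub ih =>
    intro hψ
    obtain ⟨s, hs, hψs⟩ := mem_msum hψ
    rw [Multiset.mem_map] at hs
    obtain ⟨p, hpL, hps⟩ := hs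
    subst hps
    set q : Multiset Φ × Φ := (p.1.erase ψ + Λ', p.2) with hq
    set L' : Multiset (Multiset Φ × Φ) := q ::ₘ L.erase p with hL'
    have hLsplit : L = p ::ₘ L.erase p := (Multiset.cons_erase hpL).symm
    have hsnd : Multiset.map Prod.snd L' = Multiset.map Prod.snd L := by
      rw [hL', hLsplit]
      simp [hq]
    have hsum : (Multiset.map Prod.fst L').sum
        = ((Multiset.map Prod.fst L).sum).erase ψ + Λ' := by
      conv_rhs => rw [hLsplit]
      rw [hL']
      simp only [Multiset.map_cons, Multiset.sum_cons, hq]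
      rw [Multiset.erase_add_left_pos _ hψs, add_right_comm]
    have hsub' : ∀ r ∈ L', TDer AS r.1 r.2 := by
      intro r hr
      rw [hL', Multiset.mem_cons] at hr
      rcases hr with hr | hr
      · subst hr
        exact ih p hpL hψs
      · exact hsub r (Multiset.mem_of_mem_erase hr)
    have := TDer.rule (AS := AS) L' χ (hsnd ▸ hmem) hsub'
    rwa [hsum] at this

private lemma tprov_monotone {Φ : Type*} (AS : Set (Multiset Φ × Φ)) :
    IsMonotone (TProv AS) := by
  rintro Γ Δ φ ⟨Λ, Δ', hder, hax, hle⟩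
  refine ⟨Λ, Δ', hder, hax, le_trans hle ?_⟩
  rw [add_right_comm]
  exact Multiset.le_add_right _ _
 
private lemma tprov_cut {Φ : Type*} (AS : Set (Multiset Φ × Φ)) (Γ Δ : Multiset Φ)
    (ψ φ : Φ) (h1 : TProv AS (Γ + {ψ}) φ) (h2 : TProv AS Δ ψ) : TProv AS (Γ + Δ) φ := by
  classical
  obtain ⟨Λ, Δ₁, hder, hax1, hle1⟩ := h1
  obtain ⟨Λ', Δ₂, hder', hax2, hle2⟩ := h2
  by_cases hψ : ψ ∈ Λ
  · refine ⟨Λ.erase ψ + Λ', Δ₁ + Δ₂, tder_subst hder hder' hψ, ?_, ?_⟩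
    · intro δ hδ
      rw [Multiset.mem_add] at hδ
      exact hδ.elim (hax1 δ) (hax2 δ)
    · have he : Λ.erase ψ ≤ Γ + Δ₁ := by
        rw [Multiset.le_iff_count] at hle1 ⊢
        intro a
        have := hle1 a
        by_cases ha : a = ψ
        · subst ha
          simp_all [Multiset.count_erase_self]
          omega
        · rw [Multiset.count_erase_of_ne ha]
          simpa [Multiset.count_singleton, ha] using this
      calc Λ.erase ψ + Λ' ≤ (Γ + Δ₁) + (Δ + Δ₂) := add_le_add he hle2
        _ = (Γ + Δ) + (Δ₁ + Δ₂) := by abel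
  · refine ⟨Λ, Δ₁, hder, hax1, ?_⟩
    have hle : Λ ≤ Γ + Δ₁ := by
      rw [Multiset.le_iff_count] at hle1 ⊢
      intro a
      have := hle1 a
      by_cases ha : a = ψ
      · subst ha
        have : Multiset.count a Λ = 0 := Multiset.count_eq_zero_of_notMem hψ
        omega
      · simpa [Multiset.count_singleton, ha] using this
    calc Λ ≤ Γ + Δ₁ := hle
      _ ≤ (Γ + Δ) + Δ₁ := by rw [add_right_comm]; exact Multiset.le_add_right _ _

private lemma rtprov_le_tprov {Φ : Type*} (AS : Set (Multiset Φ × Φ)) {Γ : Multiset Φ}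
    {φ : Φ} (h : RTProv AS Γ φ) : TProv AS Γ φ := by
  obtain ⟨Λ, Δ, hder, hax, heq⟩ := h
  exact ⟨Λ, Δ, hder, hax, heq.le⟩

/-- `⊢ʳ_AS` is a monotone consequence relation iff `⊢_AS = ⊢ʳ_AS`. -/
theorem rtprov_monotone_iff_eq_tprov {Φ : Type*} (AS : Set (Multiset Φ × Φ)) :
    (IsConseq (RTProv AS) ∧ IsMonotone (RTProv AS)) ↔ TProv AS = RTProv AS := by
  constructor
  · rintro ⟨-, hmono⟩
    funext Γ φ
    apply propext
    constructor
    · rintro ⟨Λ, Δ, hder, hax, hle⟩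
      classical
      have h0 : RTProv AS Λ φ := ⟨Λ, 0, hder, by simp, by simp⟩
      have h1 : RTProv AS (Λ + (Γ + Δ - Λ)) φ := hmono _ _ _ h0
      rw [add_tsub_cancel_of_le hle] at h1
      obtain ⟨Λ', Δ', hder', hax', heq'⟩ := h1
      refine ⟨Λ', Δ + Δ', hder', ?_, by rw [heq']; abel⟩
      intro δ hδ
      rw [Multiset.mem_add] at hδ
      exact hδ.elim (hax δ) (hax' δ)
    · exact rtprov_le_tprov AS
  · intro heq
    refine ⟨⟨fun φ => ⟨{φ}, 0, TDer.leaf φ, by simp, by simp⟩, ?_⟩, ?_⟩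
    · intro Γ Δ ψ φ h1 h2
      rw [← heq] at h1 h2 ⊢
      exact tprov_cut AS Γ Δ ψ φ h1 h2
    · intro Γ Δ φ h
      rw [← heq] at h ⊢
      exact tprov_monotone AS Γ Δ φ h
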